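/- Let F̂(z) = Mz + G(z) be a lift of a torus map satisfying the expanding-block assumption, with ‖A⁻¹‖ ≤ 1/K for some constant K > 1, and let Φ̂(z) = lim_{n→∞} A^{−n} P(F̂^n(z)). Let ‖G‖₀ := sup_{z∈ℝ^d} ‖G(z)‖. Then for every z₁, z₂ ∈ ℝ^d, | ‖Φ̂(z₁) − Φ̂(z₂)‖ − ‖P z₁ − P z₂‖ | ≤ 2‖G‖₀ / (K − 1). -/

import Mathlib

/-!
Write `uₙ = A⁻ⁿ P F̂ⁿ(z)`. Since `P F̂ = A P + P G`, consecutive terms differ by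
`A⁻⁽ⁿ⁺¹⁾ P G(F̂ⁿ z)`, of norm at most `‖G‖₀ / Kⁿ⁺¹`. Summing the geometric series gives
`‖Φ̂(z) − P z‖ ≤ ‖G‖₀ / (K − 1)` for every `z`, and the triangle inequality applied at `z₁`
and `z₂` gives the claim.
-/

open Filter Topology

noncomputable section

/-- Reinterpret a vector `Fin d → ℝ` as a point of Euclidean space `ℝ^d`. -/
def toEuc (d : ℕ) (v : Fin d → ℝ) : EuclideanSpace ℝ (Fin d) := WithLp.toLp 2 v

/-- Projection onto the first `k` coordinates of `ℝ^d`. -/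
def projP (d k : ℕ) (h : k ≤ d) (z : EuclideanSpace ℝ (Fin d)) :
    EuclideanSpace ℝ (Fin k) :=
  WithLp.toLp 2 (fun i => z (Fin.castLE h i))

lemma projP_add (d k : ℕ) (h : k ≤ d) (x y : EuclideanSpace ℝ (Fin d)) :
    projP d k h (x + y) = projP d k h x + projP d k h y := by
  ext i; simp [projP]

lemma norm_projP_le (d k : ℕ) (h : k ≤ d) (z : EuclideanSpace ℝ (Fin d)) :
    ‖projP d k h z‖ ≤ ‖z‖ := by
  rw [EuclideanSpace.norm_eq, EuclideanSpace.norm_eq]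
  apply Real.sqrt_le_sqrt
  have hsum : ∑ i : Fin k, ‖projP d k h z i‖ ^ 2
      = ∑ j ∈ Finset.univ.image (Fin.castLE h), ‖z j‖ ^ 2 := by
    rw [Finset.sum_image fun a _ b _ hab => Fin.castLE_injective h hab]
    rfl
  rw [hsum]
  exact Finset.sum_le_sum_of_subset_of_nonneg (Finset.subset_univ _)
    fun j _ _ => by positivity

section Renormalization

variable {X V : Type*} [NormedAddCommGroup V] [NormedSpace ℝ V]

theorem ContinuousLinearEquiv.norm_pow_apply_le (B : V ≃L[ℝ] V) (n : ℕ) (v : V) :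
    ‖(B ^ n) v‖ ≤ ‖(B : V →L[ℝ] V)‖ ^ n * ‖v‖ := by
  induction n generalizing v with
  | zero => exact (one_mul _).ge
  | succ n ih =>
    calc ‖(B ^ n) (B v)‖ ≤ ‖(B : V →L[ℝ] V)‖ ^ n * ‖B v‖ := ih _
      _ ≤ ‖(B : V →L[ℝ] V)‖ ^ n * (‖(B : V →L[ℝ] V)‖ * ‖v‖) := by
        gcongr; exact (B : V →L[ℝ] V).le_opNorm v
      _ = ‖(B : V →L[ℝ] V)‖ ^ (n + 1) * ‖v‖ := by ring

lemma dist_renormalized_orbit_succ_le (A : V ≃L[ℝ] V) {r C : ℝ}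
    (hA : ‖(A.symm : V →L[ℝ] V)‖ ≤ r) (f : X → X) (π : X → V)
    (hπ : ∀ x, ‖π (f x) - A (π x)‖ ≤ C) (x : X) (n : ℕ) :
    dist ((A.symm ^ n) (π (f^[n] x))) ((A.symm ^ (n + 1)) (π (f^[n + 1] x))) ≤
      C * r * r ^ n := by
  have hC : 0 ≤ C := (norm_nonneg _).trans (hπ x)
  have hr : 0 ≤ r := (norm_nonneg _).trans hA
  have hshift : (A.symm ^ n) (π (f^[n] x)) = (A.symm ^ (n + 1)) (A (π (f^[n] x))) := by
    change _ = (A.symm ^ n) (A.symm (A _))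
    rw [A.symm_apply_apply]
  rw [dist_eq_norm', hshift, ← map_sub, Function.iterate_succ_apply']
  calc ‖(A.symm ^ (n + 1)) (π (f (f^[n] x)) - A (π (f^[n] x)))‖
      ≤ ‖(A.symm : V →L[ℝ] V)‖ ^ (n + 1) * C :=
        (A.symm.norm_pow_apply_le _ _).trans (by gcongr; exact hπ _)
    _ ≤ r ^ (n + 1) * C := by gcongr
    _ = C * r * r ^ n := by ring

lemma norm_sub_le_of_tendsto_renormalized_orbit (A : V ≃L[ℝ] V) {r C : ℝ} (hr : r < 1)
    (hA : ‖(A.symm : V →L[ℝ] V)‖ ≤ r) (f : X → X) (π : X → V)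
    (hπ : ∀ x, ‖π (f x) - A (π x)‖ ≤ C) {x : X} {φ : V}
    (hφ : Tendsto (fun n : ℕ => (A.symm ^ n) (π (f^[n] x))) atTop (𝓝 φ)) :
    ‖φ - π x‖ ≤ C * r / (1 - r) := by
  rw [← dist_eq_norm, dist_comm]
  exact dist_le_of_le_geometric_of_tendsto₀ r (C * r) hr
    (dist_renormalized_orbit_succ_le A hA f π hπ x) hφ

end Renormalization

lemma abs_norm_sub_sub_norm_sub_le {E : Type*} [SeminormedAddCommGroup E] (a b c e : E) :
    |‖a - b‖ - ‖c - e‖| ≤ ‖a - c‖ + ‖b - e‖ :=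
  calc |‖a - b‖ - ‖c - e‖| ≤ ‖(a - b) - (c - e)‖ := abs_norm_sub_norm_le _ _
    _ = ‖(a - c) - (b - e)‖ := by congr 1; abel
    _ ≤ ‖a - c‖ + ‖b - e‖ := norm_sub_le _ _

theorem stmt4_general (d k : ℕ) (hkd : k ≤ d)
    (M : Matrix (Fin d) (Fin d) ℝ)
    (G : EuclideanSpace ℝ (Fin d) → EuclideanSpace ℝ (Fin d))
    (hGbdd : ∃ C, ∀ z, ‖G z‖ ≤ C)
    (F : EuclideanSpace ℝ (Fin d) → EuclideanSpace ℝ (Fin d))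
    (hF : ∀ z, F z = toEuc d (M.mulVec z) + G z)
    (A : EuclideanSpace ℝ (Fin k) ≃L[ℝ] EuclideanSpace ℝ (Fin k))
    (hPM : ∀ z : EuclideanSpace ℝ (Fin d),
      projP d k hkd (toEuc d (M.mulVec z)) = A (projP d k hkd z))
    (K : ℝ) (hK : 1 < K)
    (hAK : ‖(A.symm : EuclideanSpace ℝ (Fin k) →L[ℝ] EuclideanSpace ℝ (Fin k))‖ ≤ 1 / K)
    (Φ : EuclideanSpace ℝ (Fin d) → EuclideanSpace ℝ (Fin k))
    (hΦ : ∀ z, Tendsto (fun n : ℕ => (A.symm ^ n) (projP d k hkd (F^[n] z)))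
      atTop (𝓝 (Φ z))) :
    ∀ z₁ z₂ : EuclideanSpace ℝ (Fin d),
      |‖Φ z₁ - Φ z₂‖ - ‖projP d k hkd z₁ - projP d k hkd z₂‖| ≤
        2 * (⨆ w : EuclideanSpace ℝ (Fin d), ‖G w‖) / (K - 1) := by
  intro z₁ z₂
  set C := ⨆ w : EuclideanSpace ℝ (Fin d), ‖G w‖
  have hGC : ∀ z, ‖G z‖ ≤ C := by
    obtain ⟨C₀, hC₀⟩ := hGbdd
    exact le_ciSup ⟨C₀, by rintro _ ⟨w, rfl⟩; exact hC₀ w⟩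
  have hdefect : ∀ z, ‖projP d k hkd (F z) - A (projP d k hkd z)‖ ≤ C := fun z => by
    rw [hF, projP_add, hPM, add_sub_cancel_left]
    exact (norm_projP_le _ _ _ _).trans (hGC z)
  have hclose : ∀ z, ‖Φ z - projP d k hkd z‖ ≤ C / (K - 1) := fun z => by
    have h := norm_sub_le_of_tendsto_renormalized_orbit A
      ((div_lt_one (by linarith)).mpr hK) hAK F _ hdefect (hΦ z)
    have hK1 : K - 1 ≠ 0 := by linarith
    have hK0 : K ≠ 0 := by linarith
    convert h using 1
    field_simp
  calc _ ≤ ‖Φ z₁ - projP d k hkd z₁‖ + ‖Φ z₂ - projP d k hkd z₂‖ :=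
        abs_norm_sub_sub_norm_sub_le _ _ _ _
    _ ≤ C / (K - 1) + C / (K - 1) := add_le_add (hclose z₁) (hclose z₂)
    _ = 2 * C / (K - 1) := by ring

/--
Let `F̂(z) = Mz + G(z)` be a lift of a torus map satisfying the
expanding-block assumption, with `‖A⁻¹‖ ≤ 1/K` for some constant `K > 1`, and let
`Φ̂(z) = lim_{n→∞} A⁻ⁿ P(F̂ⁿ(z))`. Let `‖G‖₀ := sup_{z} ‖G(z)‖`. Then for every `z₁, z₂ ∈ ℝ^d`,
`|‖Φ̂(z₁) − Φ̂(z₂)‖ − ‖P z₁ − P z₂‖| ≤ 2‖G‖₀ / (K − 1)`.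
-/
theorem stmt4 (d k : ℕ) (hk : 1 ≤ k) (hkd : k ≤ d)
    (M : Matrix (Fin d) (Fin d) ℝ) (hMint : ∀ i j, ∃ n : ℤ, M i j = (n : ℝ))
    (G : EuclideanSpace ℝ (Fin d) → EuclideanSpace ℝ (Fin d))
    (hGcont : Continuous G) (hGbdd : ∃ C, ∀ z, ‖G z‖ ≤ C)
    (hGper : ∀ (z : EuclideanSpace ℝ (Fin d)) (p : Fin d → ℤ),
      G (z + toEuc d fun i => (p i : ℝ)) = G z)
    (F : EuclideanSpace ℝ (Fin d) → EuclideanSpace ℝ (Fin d))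
    (hF : ∀ z, F z = toEuc d (M.mulVec z) + G z)
    (A : EuclideanSpace ℝ (Fin k) ≃L[ℝ] EuclideanSpace ℝ (Fin k))
    (hPM : ∀ z : EuclideanSpace ℝ (Fin d),
      projP d k hkd (toEuc d (M.mulVec z)) = A (projP d k hkd z))
    (hA : ‖(A.symm : EuclideanSpace ℝ (Fin k) →L[ℝ] EuclideanSpace ℝ (Fin k))‖ < 1)
    (K : ℝ) (hK : 1 < K)
    (hAK : ‖(A.symm : EuclideanSpace ℝ (Fin k) →L[ℝ] EuclideanSpace ℝ (Fin k))‖ ≤ 1 / K)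
    (Φ : EuclideanSpace ℝ (Fin d) → EuclideanSpace ℝ (Fin k))
    (hΦ : ∀ z, Tendsto (fun n : ℕ => (A.symm ^ n) (projP d k hkd (F^[n] z)))
      atTop (𝓝 (Φ z))) :
    ∀ z₁ z₂ : EuclideanSpace ℝ (Fin d),
      |‖Φ z₁ - Φ z₂‖ - ‖projP d k hkd z₁ - projP d k hkd z₂‖| ≤
        2 * (⨆ w : EuclideanSpace ℝ (Fin d), ‖G w‖) / (K - 1) :=
  stmt4_general d k hkd M G hGbdd F hF A hPM K hK hAK Φ hΦ
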